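/- Let s be a string, p ≥ 2, and let U be the set of nonempty suffix-palindromes of s with minimal period exactly p, assumed nonempty with k = |U| elements. Then there exist unique palindromes u, v with |u·v| = p and v nonempty such that either (1) U = {(uv)^{k+1}u, (uv)^k u, ..., (uv)^2 u} and the longest suffix-palindrome of s shorter than every member of U is uvu, or (2) U = {(uv)^k u, ..., uvu} and the longest suffix-palindrome of s shorter than every member of U is u (when u is nonempty). -/

import Mathlib

/-!
Let `W` be the longest member of the `p`-series. A palindrome with period `p` factors as
`W = (uv)^M u` with `u`, `v` palindromes and `|uv| = p`. Any member `w` is a palindromic suffix,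
hence a border, of `W`, so `|W| - |w|` is a period of `W`; by Fine–Wilf and minimality of `p`,
`p ∣ |W| - |w|`, i.e. `w = (uv)^m u`. Conversely `(uv)^m u` is a prefix of `W`, and for `m ≥ 2` it
is long enough for Fine–Wilf to push any smaller period back to `W`, so only `uvu` can leave the
series. Finally, a palindromic suffix shorter than the shortest member `w₀` is a border of `w₀`,
hence has length at most `|w₀| - p`, which `(uv)^{m-1}u` attains. Uniqueness: `|u|` is
`|W| mod p` and `uv` is the prefix of length `p` of `W`.
-/

/-- `p` is a period of `w`: letters at distance `p` agree. -/
def HasPeriod {α : Type*} (w : List α) (p : ℕ) : Prop :=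
  ∀ i : ℕ, i + p < w.length → w[i]? = w[i + p]?

/-- The minimal period of `w`. -/
noncomputable def minPeriod {α : Type*} (w : List α) : ℕ :=
  sInf {p : ℕ | 0 < p ∧ HasPeriod w p}

/-- `k`-th power of a list: `k` concatenated copies of `w`. -/
def listPow {α : Type*} (w : List α) (k : ℕ) : List α := (List.replicate k w).flatten

/-- `s` admits a factorization into exactly `k` nonempty palindromes. -/
def HasPalFact {α : Type*} (s : List α) (k : ℕ) : Prop :=
  ∃ L : List (List α), L.length = k ∧ L.flatten = s ∧ ∀ w ∈ L, w ≠ [] ∧ w.reverse = w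

/-- Palindromic length: minimum number of nonempty palindromic factors (`pl ε = 0`). -/
noncomputable def pl {α : Type*} (s : List α) : ℕ := sInf {k : ℕ | HasPalFact s k}

/-- `plParity j s` : minimum `k ≡ j (mod 2)` with a palindromic `k`-factorization, `⊤` if none. -/
noncomputable def plParity {α : Type*} (j : ℕ) (s : List α) : ℕ∞ :=
  sInf {n : ℕ∞ | ∃ k : ℕ, n = (k : ℕ∞) ∧ k % 2 = j ∧ HasPalFact s k}

/-- The set of nonempty palindromic suffixes of `s` with minimal period exactly `p`
(the `p`-series of `s`). -/
def pSeries {α : Type*} (s : List α) (p : ℕ) : Set (List α) :=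
  {w | w <:+ s ∧ w ≠ [] ∧ w.reverse = w ∧ minPeriod w = p}

/-- `x` is the longest suffix-palindrome of `s` shorter than every member of `U`
(the head of the series following `U`). -/
def IsNextSeriesHead {α : Type*} (s : List α) (U : Set (List α)) (x : List α) : Prop :=
  x <:+ s ∧ x.reverse = x ∧ (∀ w ∈ U, x.length < w.length) ∧
    ∀ y : List α, y <:+ s → y ≠ [] → y.reverse = y →
      (∀ w ∈ U, y.length < w.length) → y.length ≤ x.length

section

variable {α : Type*}

theorem hasPeriod_iff_list_hasPeriod {w : List α} {p : ℕ} : HasPeriod w p ↔ w.HasPeriod p := by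
  rw [List.hasPeriod_iff_getElem?]
  exact forall_congr' fun i => ⟨fun h hi => h (by omega), fun h hi => h (by omega)⟩

section MinPeriod

private theorem minPeriod_mem (w : List α) : minPeriod w ∈ {p : ℕ | 0 < p ∧ HasPeriod w p} :=
  Nat.sInf_mem ⟨w.length + 1, by omega, fun i hi => by omega⟩

theorem minPeriod_pos (w : List α) : 0 < minPeriod w := (minPeriod_mem w).1

theorem hasPeriod_minPeriod (w : List α) : w.HasPeriod (minPeriod w) :=
  hasPeriod_iff_list_hasPeriod.mp (minPeriod_mem w).2

theorem minPeriod_le {w : List α} {p : ℕ} (hp : 0 < p) (h : w.HasPeriod p) : minPeriod w ≤ p :=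
  Nat.sInf_le ⟨hp, hasPeriod_iff_list_hasPeriod.mpr h⟩

theorem minPeriod_le_length {w : List α} (hw : w ≠ []) : minPeriod w ≤ w.length :=
  minPeriod_le (List.length_pos_iff.mpr hw) (List.hasPeriod_of_length_le w _ le_rfl)

end MinPeriod

theorem List.HasPeriod.of_take_add {w : List α} {p g : ℕ} (hp : 0 < p) (hw : w.HasPeriod p)
    (hg : (w.take (p + g)).HasPeriod g) : w.HasPeriod g := by
  rw [List.hasPeriod_iff_getElem?] at hg ⊢
  intro i hi
  have ha : i % p < p := Nat.mod_lt i hp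
  have hai : i % p ≤ i := Nat.mod_le i p
  calc w[i]? = w[i % p]? := (hw.getElem?_mod p i w (by omega)).symm
    _ = (w.take (p + g))[i % p]? := (List.getElem?_take_of_lt (by omega)).symm
    _ = (w.take (p + g))[i % p + g]? := hg (i % p) (by simp; omega)
    _ = w[i % p + g]? := List.getElem?_take_of_lt (by omega)
    _ = w[(i + g) % p]? := by
      rw [← Nat.mod_add_mod]; exact (hw.getElem?_mod p _ w (by omega)).symm
    _ = w[i + g]? := hw.getElem?_mod p _ w (by omega)

theorem hasPeriod_of_isPrefix_of_isSuffix {y w : List α} (hpre : y <+: w) (hsuf : y <:+ w) :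
    w.HasPeriod (w.length - y.length) := by
  obtain ⟨t, rfl⟩ := hsuf
  rw [List.length_append, Nat.add_sub_cancel, List.HasPeriod, List.take_left,
    List.prefix_append_right_inj]
  exact hpre

theorem minPeriod_eq_of_isPrefix {w W : List α} (hwW : w <+: W)
    (hlen : 2 * minPeriod W ≤ w.length) : minPeriod w = minPeriod W := by
  have hp := minPeriod_pos W
  have hq := minPeriod_pos w
  have hwp : w.HasPeriod (minPeriod W) := (hasPeriod_minPeriod W).infix hwW.isInfix
  have hqp : minPeriod w ≤ minPeriod W := minPeriod_le hp hwp
  have hwg := hwp.gcd (hasPeriod_minPeriod w) (by omega)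
  have hgq := Nat.gcd_le_right (minPeriod W) hq
  have hWg : W.HasPeriod ((minPeriod W).gcd (minPeriod w)) := by
    refine (hasPeriod_minPeriod W).of_take_add hp (hwg.infix (List.IsPrefix.isInfix ?_))
    exact List.prefix_of_prefix_length_le (List.take_prefix _ _) hwW (by simp; omega)
  have := minPeriod_le (Nat.gcd_pos_of_pos_left _ hp) hWg
  omega

section Palindrome

variable {y w : List α}

theorem isPrefix_of_isSuffix_of_reverse_eq (hy : y.reverse = y) (hw : w.reverse = w)
    (h : y <:+ w) : y <+: w := by
  simpa [hy, hw] using List.reverse_prefix.mpr h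

theorem length_add_minPeriod_le (hy : y.reverse = y) (hw : w.reverse = w) (h : y <:+ w)
    (hlt : y.length < w.length) : y.length + minPeriod w ≤ w.length := by
  have := minPeriod_le (by omega)
    (hasPeriod_of_isPrefix_of_isSuffix (isPrefix_of_isSuffix_of_reverse_eq hy hw h) h)
  omega

theorem minPeriod_dvd_length_sub (hy : y.reverse = y) (hw : w.reverse = w) (h : y <:+ w)
    (hlen : minPeriod w ≤ y.length) : minPeriod w ∣ w.length - y.length := by
  have hp := minPeriod_pos w
  have hd :=
    hasPeriod_of_isPrefix_of_isSuffix (isPrefix_of_isSuffix_of_reverse_eq hy hw h) h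
  have hg := (hasPeriod_minPeriod w).gcd hd (by have := h.length_le; omega)
  have := minPeriod_le (Nat.gcd_pos_of_pos_left _ hp) hg
  exact Nat.gcd_eq_left_iff_dvd.mp (le_antisymm (Nat.gcd_le_left _ hp) this)

end Palindrome

section ListPow

variable (x : List α)

@[simp]
theorem listPow_zero : listPow x 0 = [] := rfl

theorem listPow_add (m n : ℕ) : listPow x (m + n) = listPow x m ++ listPow x n := by
  simp only [listPow, List.replicate_add, List.flatten_append]

theorem listPow_one : listPow x 1 = x := by simp [listPow]

theorem listPow_succ (n : ℕ) : listPow x (n + 1) = x ++ listPow x n := by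
  rw [Nat.add_comm, listPow_add, listPow_one]

theorem listPow_succ' (n : ℕ) : listPow x (n + 1) = listPow x n ++ x := by
  rw [listPow_add, listPow_one]

@[simp]
theorem length_listPow (n : ℕ) : (listPow x n).length = n * x.length := by
  simp [listPow]

theorem reverse_listPow (n : ℕ) : (listPow x n).reverse = listPow x.reverse n := by
  induction n with
  | zero => rfl
  | succ n ih => rw [listPow_succ, List.reverse_append, ih, listPow_succ']

theorem append_listPow_append (u v : List α) (n : ℕ) :
    u ++ listPow (v ++ u) n = listPow (u ++ v) n ++ u := by
  induction n with
  | zero => simp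
  | succ n ih => simp only [listPow_succ', ← List.append_assoc, ih]

theorem reverse_listPow_append (u v : List α) (n : ℕ) :
    (listPow (u ++ v) n ++ u).reverse = listPow (u.reverse ++ v.reverse) n ++ u.reverse := by
  rw [List.reverse_append, reverse_listPow, List.reverse_append, append_listPow_append]

variable {x}

theorem listPow_append_isSuffix (u : List α) {m n : ℕ} (h : m ≤ n) :
    listPow x m ++ u <:+ listPow x n ++ u := by
  obtain ⟨k, rfl⟩ := Nat.exists_eq_add_of_le h
  exact ⟨listPow x k, by rw [Nat.add_comm, listPow_add, List.append_assoc]⟩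

theorem listPow_append_isPrefix {u : List α} (hu : u <+: x) {m n : ℕ} (h : m ≤ n) :
    listPow x m ++ u <+: listPow x n ++ u := by
  obtain ⟨k, rfl⟩ := Nat.exists_eq_add_of_le h
  rw [listPow_add, List.append_assoc, List.prefix_append_right_inj]
  cases k with
  | zero => simp
  | succ k =>
    rw [listPow_succ, List.append_assoc]
    exact hu.trans (List.prefix_append _ _)

theorem eq_listPow_append_of_isSuffix {u y : List α} {n j : ℕ} (h : y <:+ listPow x n ++ u)
    (hjn : j ≤ n) (hlen : y.length + j * x.length = (listPow x n ++ u).length) :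
    y = listPow x (n - j) ++ u := by
  have hsuf := listPow_append_isSuffix u (Nat.sub_le n j) (x := x)
  have hjx : j * x.length ≤ n * x.length := Nat.mul_le_mul_right _ hjn
  have hlen' : y.length = (listPow x (n - j) ++ u).length := by
    simp only [List.length_append, length_listPow, Nat.sub_mul] at hlen ⊢
    omega
  exact (List.suffix_of_suffix_length_le h hsuf hlen'.le).eq_of_length hlen'

theorem listPow_append_injective (u : List α) (hx : x ≠ []) :
    Function.Injective fun n => listPow x n ++ u := fun m n h => by
  have := congrArg List.length h
  simp only [List.length_append, length_listPow, Nat.add_right_cancel_iff] at this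
  exact Nat.eq_of_mul_eq_mul_right (List.length_pos_iff.mpr hx) this

theorem ncard_setOf_listPow_append (u : List α) (hx : x ≠ []) (a b : ℕ) :
    {w | ∃ m, a ≤ m ∧ m ≤ b ∧ w = listPow x m ++ u}.ncard = b + 1 - a := by
  have : {w | ∃ m, a ≤ m ∧ m ≤ b ∧ w = listPow x m ++ u} =
      (fun n => listPow x n ++ u) '' Set.Icc a b := by
    ext w
    simp [eq_comm, and_assoc]
  rw [this, Set.ncard_image_of_injective _ (listPow_append_injective u hx), ← Finset.coe_Icc,
    Set.ncard_coe_finset, Nat.card_Icc]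

end ListPow

theorem reverse_eq_of_reverse_listPow_append {u v : List α} {n : ℕ} (hn : n ≠ 0)
    (h : (listPow (u ++ v) n ++ u).reverse = listPow (u ++ v) n ++ u) :
    u.reverse = u ∧ v.reverse = v := by
  obtain ⟨n, rfl⟩ : ∃ k, n = k + 1 := Nat.exists_eq_succ_of_ne_zero hn
  rw [reverse_listPow_append] at h
  simp only [listPow_succ, List.append_assoc] at h
  obtain ⟨hu, h⟩ := List.append_inj h (by simp)
  exact ⟨hu, (List.append_inj h (by simp)).1⟩

theorem eq_of_listPow_append_eq {u v u' v' : List α} {m m' : ℕ}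
    (h : listPow (u ++ v) m ++ u = listPow (u' ++ v') m' ++ u')
    (hlen : (u ++ v).length = (u' ++ v').length) (hv : v ≠ []) (hv' : v' ≠ [])
    (hm : m ≠ 0) (hm' : m' ≠ 0) : u = u' ∧ v = v' := by
  have hu : u.length = u'.length := by
    have hv := List.length_pos_iff.mpr hv
    have hv' := List.length_pos_iff.mpr hv'
    have h' := congrArg List.length h
    simp only [List.length_append, length_listPow] at h' hlen
    rw [hlen] at h'
    calc u.length = (u.length + m * (u'.length + v'.length)) % (u'.length + v'.length) := by
          rw [Nat.add_mul_mod_self_right, Nat.mod_eq_of_lt (by omega)]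
      _ = (u'.length + m' * (u'.length + v'.length)) % (u'.length + v'.length) := by
          congr 1; omega
      _ = u'.length := by rw [Nat.add_mul_mod_self_right, Nat.mod_eq_of_lt (by omega)]
  have hsuf : u' <:+ listPow (u ++ v) m ++ u := by rw [h]; exact List.suffix_append _ _
  obtain rfl : u = u' :=
    (List.suffix_of_suffix_length_le (List.suffix_append _ _) hsuf hu.le).eq_of_length hu
  obtain ⟨m, rfl⟩ : ∃ k, m = k + 1 := Nat.exists_eq_succ_of_ne_zero hm
  obtain ⟨m', rfl⟩ : ∃ k, m' = k + 1 := Nat.exists_eq_succ_of_ne_zero hm'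
  simp only [listPow_succ, List.append_assoc] at h
  have hv : v.length = v'.length := by simpa using hlen
  exact ⟨rfl, (List.append_inj (List.append_cancel_left h) hv).1⟩

theorem List.HasPeriod.isPrefix_listPow_take_append {w : List α} {p : ℕ} (h : w.HasPeriod p)
    (n : ℕ) : w <+: listPow (w.take p) n ++ w := by
  induction n with
  | zero => simp
  | succ n ih =>
    rw [listPow_succ', List.append_assoc]
    exact ih.trans ((List.prefix_append_right_inj _).mpr h)

theorem List.HasPeriod.eq_listPow_take_append {w : List α} {p : ℕ} (h : w.HasPeriod p)
    (hp : 0 < p) (hpw : p ≤ w.length) :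
    w = listPow (w.take p) (w.length / p) ++ (w.take p).take (w.length % p) := by
  have hx : (w.take p).length = p := List.length_take_of_le hpw
  have hw := Nat.div_add_mod' w.length p
  have hr := Nat.mod_lt w.length hp
  conv_lhs =>
    rw [List.prefix_iff_eq_take.mp (h.isPrefix_listPow_take_append (w.length / p + 1)),
      listPow_succ', List.append_assoc, List.take_append, length_listPow, hx,
      List.take_of_length_le (by simp [hx]; omega), List.take_append_of_le_length (by omega)]
  congr 2
  omega

theorem exists_eq_listPow_append_of_hasPeriod {w : List α} {p : ℕ} (hw : w.reverse = w)
    (h : w.HasPeriod p) (hp : 0 < p) (hpw : p ≤ w.length) :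
    ∃ u v : List α, u.reverse = u ∧ v.reverse = v ∧ v ≠ [] ∧ (u ++ v).length = p ∧
      ∃ M, 1 ≤ M ∧ w = listPow (u ++ v) M ++ u := by
  have hdec := h.eq_listPow_take_append hp hpw
  obtain ⟨u, v, huv, hu⟩ : ∃ u v, u ++ v = w.take p ∧ u = (w.take p).take (w.length % p) :=
    ⟨_, _, List.take_append_drop _ _, rfl⟩
  rw [← hu, ← huv] at hdec
  have hM : 1 ≤ w.length / p := (Nat.one_le_div_iff hp).mpr hpw
  have hlen : (u ++ v).length = p := by rw [huv, List.length_take_of_le hpw]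
  have hu_lt : u.length < p := by
    rw [hu, List.length_take]
    exact lt_of_le_of_lt (min_le_left _ _) (Nat.mod_lt _ hp)
  obtain ⟨hu_pal, hv_pal⟩ := reverse_eq_of_reverse_listPow_append (by omega) (hdec ▸ hw)
  refine ⟨u, v, hu_pal, hv_pal, ?_, hlen, _, hM, hdec⟩
  rintro rfl
  simp at hlen
  omega

section Series

variable {s u v : List α} {p M : ℕ}

theorem pSeries_finite (s : List α) (p : ℕ) : (pSeries s p).Finite :=
  (List.finite_toSet s.tails).subset fun w hw => (List.mem_tails w s).mpr hw.1

theorem isNextSeriesHead_of_isLeast {w₀ x : List α} (h₀ : w₀ ∈ pSeries s p)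
    (hmin : ∀ w ∈ pSeries s p, w₀.length ≤ w.length) (hx : x <:+ s) (hxpal : x.reverse = x)
    (hlen : x.length + p = w₀.length) : IsNextSeriesHead s (pSeries s p) x := by
  have hp : 0 < p := h₀.2.2.2 ▸ minPeriod_pos w₀
  refine ⟨hx, hxpal, fun w hw => by have := hmin w hw; omega, fun y hys _ hypal hy => ?_⟩
  have hylt := hy w₀ h₀
  have := length_add_minPeriod_le hypal h₀.2.2.1
    (List.suffix_of_suffix_length_le hys h₀.1 hylt.le) hylt
  rw [h₀.2.2.2] at this
  omega

theorem mem_pSeries_iff (hW : listPow (u ++ v) M ++ u ∈ pSeries s p)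
    (hmax : ∀ w ∈ pSeries s p, w.length ≤ (listPow (u ++ v) M ++ u).length)
    (hu : u.reverse = u) (hv : v.reverse = v) (huv : (u ++ v).length = p) (hv0 : v ≠ [])
    {w : List α} :
    w ∈ pSeries s p ↔ ∃ m, 1 ≤ m ∧ m ≤ M ∧ w = listPow (u ++ v) m ++ u ∧ minPeriod w = p := by
  obtain ⟨hWs, -, hWpal, hWp⟩ := hW
  constructor
  · intro hw
    have ⟨hws, hw0, hwpal, hwp⟩ := hw
    have hwW : w <:+ listPow (u ++ v) M ++ u :=
      List.suffix_of_suffix_length_le hws hWs (hmax w hw)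
    have hpw : p ≤ w.length := hwp ▸ minPeriod_le_length hw0
    obtain ⟨j, hj⟩ := hWp ▸ minPeriod_dvd_length_sub hwpal hWpal hwW (hWp ▸ hpw)
    have hu_lt : u.length < p := by
      have := List.length_pos_iff.mpr hv0
      simp only [List.length_append] at huv
      omega
    have hWlen := hwW.length_le
    simp only [List.length_append, length_listPow, huv] at hj hWlen
    have hjM : j < M := Nat.lt_of_mul_lt_mul_left (a := p) (by rw [Nat.mul_comm p M]; omega)
    refine ⟨M - j, by omega, Nat.sub_le M j, ?_, hwp⟩
    exact eq_listPow_append_of_isSuffix hwW hjM.le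
      (by simp only [List.length_append, length_listPow, huv]; rw [Nat.mul_comm j p]; omega)
  · rintro ⟨m, hm, hmM, rfl, hwp⟩
    refine ⟨(listPow_append_isSuffix u hmM).trans hWs, ?_, ?_, hwp⟩
    · obtain ⟨m, rfl⟩ : ∃ k, m = k + 1 := Nat.exists_eq_succ_of_ne_zero (by omega)
      simp [listPow_succ, hv0]
    · rw [reverse_listPow_append, hu, hv]

theorem minPeriod_listPow_append (hWp : minPeriod (listPow (u ++ v) M ++ u) = p)
    (huv : (u ++ v).length = p) {m : ℕ} (hm : 2 ≤ m) (hmM : m ≤ M) :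
    minPeriod (listPow (u ++ v) m ++ u) = p := by
  rw [← hWp]
  refine minPeriod_eq_of_isPrefix (listPow_append_isPrefix (List.prefix_append u v) hmM) ?_
  rw [hWp, List.length_append, length_listPow, huv]
  nlinarith

theorem pSeries_eq_of_minPeriod_eq (hW : listPow (u ++ v) M ++ u ∈ pSeries s p)
    (hmax : ∀ w ∈ pSeries s p, w.length ≤ (listPow (u ++ v) M ++ u).length)
    (hu : u.reverse = u) (hv : v.reverse = v) (huv : (u ++ v).length = p) (hv0 : v ≠ [])
    (h1 : minPeriod (listPow (u ++ v) 1 ++ u) = p) :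
    pSeries s p = {w | ∃ m, 1 ≤ m ∧ m ≤ M ∧ w = listPow (u ++ v) m ++ u} := by
  ext w
  rw [mem_pSeries_iff hW hmax hu hv huv hv0]
  constructor
  · rintro ⟨m, hm, hmM, rfl, -⟩
    exact ⟨m, hm, hmM, rfl⟩
  · rintro ⟨m, hm, hmM, rfl⟩
    refine ⟨m, hm, hmM, rfl, ?_⟩
    rcases hm.eq_or_lt with rfl | hm
    exacts [h1, minPeriod_listPow_append hW.2.2.2 huv hm hmM]

theorem pSeries_eq_of_minPeriod_ne (hW : listPow (u ++ v) M ++ u ∈ pSeries s p)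
    (hmax : ∀ w ∈ pSeries s p, w.length ≤ (listPow (u ++ v) M ++ u).length)
    (hu : u.reverse = u) (hv : v.reverse = v) (huv : (u ++ v).length = p) (hv0 : v ≠ [])
    (h1 : minPeriod (listPow (u ++ v) 1 ++ u) ≠ p) :
    pSeries s p = {w | ∃ m, 2 ≤ m ∧ m ≤ M ∧ w = listPow (u ++ v) m ++ u} := by
  ext w
  rw [mem_pSeries_iff hW hmax hu hv huv hv0]
  constructor
  · rintro ⟨m, hm, hmM, rfl, hwp⟩
    refine ⟨m, ?_, hmM, rfl⟩
    rcases hm.eq_or_lt with rfl | hm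
    exacts [absurd hwp h1, hm]
  · rintro ⟨m, hm, hmM, rfl⟩
    exact ⟨m, by omega, hmM, rfl, minPeriod_listPow_append hW.2.2.2 huv hm hmM⟩

theorem isNextSeriesHead_of_pSeries_eq {a : ℕ}
    (hset : pSeries s p = {w | ∃ m, a + 1 ≤ m ∧ m ≤ M ∧ w = listPow (u ++ v) m ++ u})
    (haM : a + 1 ≤ M) (hs : listPow (u ++ v) M ++ u <:+ s) (hu : u.reverse = u)
    (hv : v.reverse = v) (huv : (u ++ v).length = p) :
    IsNextSeriesHead s (pSeries s p) (listPow (u ++ v) a ++ u) := by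
  refine isNextSeriesHead_of_isLeast (w₀ := listPow (u ++ v) (a + 1) ++ u)
    (hset ▸ ⟨a + 1, le_rfl, haM, rfl⟩) ?_ ((listPow_append_isSuffix u (by omega)).trans hs)
    (by rw [reverse_listPow_append, hu, hv]) ?_
  · rw [hset]
    rintro _ ⟨m, hm, -, rfl⟩
    exact (listPow_append_isSuffix u hm).length_le
  · simp only [List.length_append, length_listPow, huv]
    ring

end Series

end

theorem p_series_structure_general {α : Type*} (s : List α) (p k : ℕ)
    (hU : (pSeries s p).Nonempty) (hk : k = (pSeries s p).ncard) :
    ∃! uv : List α × List α,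
      uv.1.reverse = uv.1 ∧ uv.2.reverse = uv.2 ∧ uv.2 ≠ [] ∧ (uv.1 ++ uv.2).length = p ∧
      ((pSeries s p = {w | ∃ m : ℕ, 2 ≤ m ∧ m ≤ k + 1 ∧ w = listPow (uv.1 ++ uv.2) m ++ uv.1} ∧
          IsNextSeriesHead s (pSeries s p) (uv.1 ++ uv.2 ++ uv.1)) ∨
       (pSeries s p = {w | ∃ m : ℕ, 1 ≤ m ∧ m ≤ k ∧ w = listPow (uv.1 ++ uv.2) m ++ uv.1} ∧
          (uv.1 ≠ [] → IsNextSeriesHead s (pSeries s p) uv.1))) := by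
  obtain ⟨W, hW, hWmax⟩ := Set.exists_max_image _ List.length (pSeries_finite s p) hU
  have hWp : minPeriod W = p := hW.2.2.2
  obtain ⟨u, v, hu, hv, hv0, huv, M, hM, rfl⟩ := exists_eq_listPow_append_of_hasPeriod hW.2.2.1
    (hWp ▸ hasPeriod_minPeriod W) (hWp ▸ minPeriod_pos W) (hWp ▸ minPeriod_le_length hW.2.1)
  have hx : u ++ v ≠ [] := by simp [hv0]
  refine ⟨(u, v), ⟨hu, hv, hv0, huv, ?_⟩, ?_⟩
  · by_cases h1 : minPeriod (listPow (u ++ v) 1 ++ u) = p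
    · have hset := pSeries_eq_of_minPeriod_eq hW hWmax hu hv huv hv0 h1
      obtain rfl : k = M := by rw [hk, hset, ncard_setOf_listPow_append u hx]; omega
      refine Or.inr ⟨hset, fun _ => ?_⟩
      simpa using isNextSeriesHead_of_pSeries_eq (a := 0) hset hM hW.1 hu hv huv
    · have hset := pSeries_eq_of_minPeriod_ne hW hWmax hu hv huv hv0 h1
      obtain ⟨m, hm, hmM, -⟩ := hset ▸ hW
      obtain rfl : M = k + 1 := by rw [hk, hset, ncard_setOf_listPow_append u hx]; omega
      refine Or.inl ⟨hset, ?_⟩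
      simpa [listPow_one] using
        isNextSeriesHead_of_pSeries_eq (a := 1) hset (by omega) hW.1 hu hv huv
  · rintro ⟨u', v'⟩ ⟨-, -, hv0', hu'v', hcase⟩
    obtain ⟨m, hm, hWm⟩ : ∃ m, m ≠ 0 ∧ listPow (u ++ v) M ++ u = listPow (u' ++ v') m ++ u' := by
      rcases hcase with ⟨hset, -⟩ | ⟨hset, -⟩ <;>
      · obtain ⟨m, hm, -, hWm⟩ := hset ▸ hW
        exact ⟨m, by omega, hWm⟩
    obtain ⟨rfl, rfl⟩ :=
      eq_of_listPow_append_eq hWm (huv.trans hu'v'.symm) hv0 hv0' (by omega) hm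
    rfl

/-- structure of a `p`-series with `p ≥ 2`: there are unique palindromes
`u`, `v` with `|uv| = p`, `v ≠ ε` such that either the series is
`{(uv)^{k+1}u, ..., (uv)^2 u}` and the next series begins with `uvu`, or the series is
`{(uv)^k u, ..., uvu}` and the next series begins with `u` (when `u` is nonempty). -/
theorem p_series_structure {α : Type*} (s : List α) (p k : ℕ) (hp : 2 ≤ p)
    (hU : (pSeries s p).Nonempty) (hk : k = (pSeries s p).ncard) :
    ∃! uv : List α × List α,
      uv.1.reverse = uv.1 ∧ uv.2.reverse = uv.2 ∧ uv.2 ≠ [] ∧ (uv.1 ++ uv.2).length = p ∧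
      ((pSeries s p = {w | ∃ m : ℕ, 2 ≤ m ∧ m ≤ k + 1 ∧ w = listPow (uv.1 ++ uv.2) m ++ uv.1} ∧
          IsNextSeriesHead s (pSeries s p) (uv.1 ++ uv.2 ++ uv.1)) ∨
       (pSeries s p = {w | ∃ m : ℕ, 1 ≤ m ∧ m ≤ k ∧ w = listPow (uv.1 ++ uv.2) m ++ uv.1} ∧
          (uv.1 ≠ [] → IsNextSeriesHead s (pSeries s p) uv.1))) :=
  p_series_structure_general s p k hU hk
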